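/- Let C ⊆ V, r > 0, and v1, v2 ∈ C, and suppose that any two consecutive vertices of C along p(v1,v2) (i.e., two vertices of C on the path with no other vertex of C strictly between them) are at distance at most r from each other. Then the shortest-path distance between v1 and v2 in the shortcut graph G(C,r) equals d_G(v1,v2); moreover, every vertex v3 ∈ C lying on a shortest v1–v2 path in G(C,r) also lies on p(v1,v2). -/

import Mathlib

set_option linter.unusedSectionVars false


open SimpleGraph

/-- The length (total weight) of a walk under an edge-weight function `w`. -/
noncomputable def wlen {V : Type*} {G : SimpleGraph V} (w : Sym2 V → ℝ) {u v : V}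
    (p : G.Walk u v) : ℝ :=
  (p.edges.map w).sum

/-- `p` is a subwalk (subpath) of `q`. -/
def IsSubwalk {V : Type*} {G : SimpleGraph V} {u v a b : V}
    (p : G.Walk u v) (q : G.Walk a b) : Prop :=
  ∃ (q1 : G.Walk a u) (q2 : G.Walk v b), q = (q1.append p).append q2

/-- Shortest-path distance as the infimum of walk lengths. -/
noncomputable def wdist {V : Type*} (G : SimpleGraph V) (w : Sym2 V → ℝ) (u v : V) : ℝ :=
  sInf {x : ℝ | ∃ p : G.Walk u v, x = wlen w p}

/-- A finite connected positively-weighted graph (all weights at least 1) with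
unique shortest paths, in which every edge is the unique shortest path between
its endpoints.  `sp u v` is the unique shortest path from `u` to `v`. -/
structure Setting (V : Type) [Fintype V] where
  G : SimpleGraph V
  w : Sym2 V → ℝ
  connected : G.Connected
  one_le_w : ∀ e ∈ G.edgeSet, 1 ≤ w e
  sp : ∀ u v : V, G.Walk u v
  sp_isPath : ∀ u v : V, (sp u v).IsPath
  sp_shortest : ∀ (u v : V) (q : G.Walk u v), wlen w (sp u v) ≤ wlen w q
  sp_unique : ∀ (u v : V) (q : G.Walk u v), q.IsPath →
    wlen w q = wlen w (sp u v) → q = sp u v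
  edge_sp : ∀ (u v : V) (h : G.Adj u v),
    sp u v = SimpleGraph.Walk.cons h SimpleGraph.Walk.nil

namespace Setting

variable {V : Type} [Fintype V]

/-- Shortest-path distance `d(u,v)`. -/
noncomputable def d (S : Setting V) (u v : V) : ℝ := wlen S.w (S.sp u v)

/-- The ball `B(v,r)`. -/
def ball (S : Setting V) (v : V) (r : ℝ) : Set V := {u : V | S.d v u ≤ r}

/-- `maxedge(p(u,v)) ≤ r`: every edge of the shortest path has weight at most `r`. -/
def maxedgeLE (S : Setting V) (u v : V) (r : ℝ) : Prop :=
  ∀ e ∈ (S.sp u v).edges, S.w e ≤ r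

/-- An `(r,k)` vertex cover. -/
def IsVertexCover (S : Setting V) (r : ℝ) (k : ℕ) (C : Set V) : Prop :=
  (∀ v1 v2 : V, r < S.d v1 v2 → S.maxedgeLE v1 v2 r →
      ∃ c ∈ C, c ∈ (S.sp v1 v2).support) ∧
  (∀ v : V, (S.ball v (2 * r) ∩ C).ncard ≤ k)

/-- Discrete highway dimension at most `h`. -/
def DiscreteHDLE (S : Setting V) (h : ℕ) : Prop :=
  ∀ (v : V) (r : ℝ), 0 < r →
    ∃ C : Set V, C.ncard ≤ h ∧
      ∀ v1 v2 : V, (∀ x ∈ (S.sp v1 v2).support, x ∈ S.ball v (4 * r)) →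
        r < S.d v1 v2 → ∃ c ∈ C, c ∈ (S.sp v1 v2).support

/-- The (unique) shortest path from `v1` to `v2` is `r`-significant:
it has an `r`-witness. -/
def RSignificant (S : Setting V) (r : ℝ) (v1 v2 : V) : Prop :=
  ∃ a b : V, (a = v1 ∨ S.G.Adj a v1) ∧ (b = v2 ∨ S.G.Adj b v2) ∧
    r ≤ S.d a b ∧ IsSubwalk (S.sp v1 v2) (S.sp a b)

/-- The shortest path from `v1` to `v2` is `(r,2r)`-close to `v`,
i.e. it belongs to `S(v,r)`. -/
def InSvr (S : Setting V) (v : V) (r : ℝ) (v1 v2 : V) : Prop :=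
  ∃ a b : V, (a = v1 ∨ S.G.Adj a v1) ∧ (b = v2 ∨ S.G.Adj b v2) ∧
    r ≤ S.d a b ∧ IsSubwalk (S.sp v1 v2) (S.sp a b) ∧
    ∃ x ∈ (S.sp a b).support, S.d v x ≤ 2 * r

/-- Highway dimension at most `h`. -/
def HighwayDimLE (S : Setting V) (h : ℕ) : Prop :=
  ∀ (r : ℝ), 0 < r → ∀ v : V,
    ∃ C : Set V, C.ncard ≤ h ∧
      ∀ v1 v2 : V, S.InSvr v r v1 v2 → ∃ c ∈ C, c ∈ (S.sp v1 v2).support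

/-- An `(r,h')`-SPHS. -/
def IsSPHS (S : Setting V) (r : ℝ) (h' : ℕ) (C : Set V) : Prop :=
  (∀ v1 v2 : V, S.RSignificant r v1 v2 → ∃ c ∈ C, c ∈ (S.sp v1 v2).support) ∧
  (∀ v : V, (C ∩ S.ball v (2 * r)).ncard ≤ h')

/-- Adjacency in the `r`-shortcut graph `G(C,r)`. -/
def shortcutAdj (S : Setting V) (C : Set V) (r : ℝ) (v1 v2 : V) : Prop :=
  v1 ≠ v2 ∧ v1 ∈ C ∧ v2 ∈ C ∧ S.d v1 v2 ≤ r ∧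
    ∀ c ∈ C, c ∈ (S.sp v1 v2).support → c = v1 ∨ c = v2

/-- An `(r,η)` path cover, a set of shortest paths represented by their
endpoint pairs. -/
def IsPathCover (S : Setting V) (r : ℝ) (η : ℕ) (P : Set (V × V)) : Prop :=
  (∀ q ∈ P, r / 4 ≤ S.d q.1 q.2 ∧ S.d q.1 q.2 ≤ r) ∧
  (∀ v1 v2 : V, r / 2 ≤ S.d v1 v2 → S.d v1 v2 ≤ r → S.maxedgeLE v1 v2 (r / 8) →
    ∃ q ∈ P, IsSubwalk (S.sp q.1 q.2) (S.sp v1 v2) ∧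
      S.d v1 q.1 ≤ r / 8 ∧ S.d q.2 v2 ≤ r / 8) ∧
  (∀ v : V, {q ∈ P | ∃ x ∈ (S.sp q.1 q.2).support, S.d v x ≤ 4 * r}.ncard ≤ η)

/-- A pair of vertices of `Cm` is *considered* at level `i`. -/
def Considered (S : Setting V) (Cm : Set V) (i : ℤ) (q : V × V) : Prop :=
  q.1 ∈ Cm ∧ q.2 ∈ Cm ∧
    3 / 4 * (8 : ℝ) ^ i ≤ S.d q.1 q.2 ∧ S.d q.1 q.2 ≤ (8 : ℝ) ^ i ∧
    S.maxedgeLE q.1 q.2 ((8 : ℝ) ^ (i - 1))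

/-- `C'` is a valid output of the greedy construction at level `i` from `Cm`. -/
def ValidGreedy (S : Setting V) (Cm : Set V) (i : ℤ) (C' : Set V) : Prop :=
  ∃ (m : ℕ) (q : Fin m → V × V),
    Function.Injective q ∧
    (∀ p : V × V, S.Considered Cm i p ↔ ∃ j : Fin m, q j = p) ∧
    ∃ Sc : Fin (m + 1) → Set V,
      Sc 0 = ∅ ∧ Sc (Fin.last m) = C' ∧
      ∀ j : Fin m,
        ((∃ c ∈ Sc j.castSucc, c ∈ (S.sp (q j).1 (q j).2).support) →
          Sc j.succ = Sc j.castSucc) ∧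
        ((¬ ∃ c ∈ Sc j.castSucc, c ∈ (S.sp (q j).1 (q j).2).support) →
          ∃ c ∈ Cm, c ∈ (S.sp (q j).1 (q j).2).support ∧
            (∀ c' ∈ Cm, c' ∈ (S.sp (q j).1 (q j).2).support →
              |S.d (q j).1 c - S.d (q j).1 (q j).2 / 2| ≤
                |S.d (q j).1 c' - S.d (q j).1 (q j).2 / 2|) ∧
            Sc j.succ = insert c (Sc j.castSucc))

/-- The set of endpoints of edges of weight greater than `t`. -/
def bigEdgeEnds (S : Setting V) (t : ℝ) : Set V :=
  {x : V | ∃ e ∈ S.G.edgeSet, t < S.w e ∧ x ∈ e}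

end Setting

section Aux
variable {V : Type*} {G : SimpleGraph V}

@[simp] lemma wlen_nil {w : Sym2 V → ℝ} {u : V} : wlen w (Walk.nil : G.Walk u u) = 0 := by
  simp [wlen]

lemma wlen_append {w : Sym2 V → ℝ} {u v x : V} (p : G.Walk u v) (q : G.Walk v x) :
    wlen w (p.append q) = wlen w p + wlen w q := by
  simp [wlen, Walk.edges_append]

@[simp] lemma wlen_copy {w : Sym2 V → ℝ} {u v u' v' : V} (p : G.Walk u v)
    (h1 : u = u') (h2 : v = v') : wlen w (p.copy h1 h2) = wlen w p := by
  simp [wlen, Walk.edges_copy]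

lemma sum_le_of_sublist {α : Type*} (w : α → ℝ) {l₁ l₂ : List α} (h : l₁.Sublist l₂)
    (hw : ∀ e ∈ l₂, 1 ≤ w e) :
    (l₁.map w).sum + ((l₂.length : ℝ) - l₁.length) ≤ (l₂.map w).sum := by
  induction h with
  | slnil => simp
  | @cons l₁ l₂ a h ih =>
    have ha := hw a (List.mem_cons_self)
    have h2 := ih (fun e he => hw e (List.mem_cons_of_mem _ he))
    simp only [List.map_cons, List.sum_cons, List.length_cons]
    push_cast
    linarith
  | @cons_cons l₁ l₂ a h ih =>
    have h2 := ih (fun e he => hw e (List.mem_cons_of_mem _ he))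
    simp only [List.map_cons, List.sum_cons, List.length_cons]
    push_cast
    linarith

variable [DecidableEq V]

lemma bypass_eq_of_isPath {u v : V} (p : G.Walk u v) (h : p.IsPath) : p.bypass = p := by
  induction p with
  | nil => rfl
  | cons ha p ih =>
    rw [Walk.cons_isPath_iff] at h
    have hb := ih h.1
    simp only [Walk.bypass]
    rw [dif_neg (by rw [hb]; exact h.2)]
    rw [hb]

lemma bypass_length_lt {u v : V} (q : G.Walk u v) (h : ¬ q.IsPath) :
    q.bypass.length < q.length := by
  induction q with
  | nil => exact absurd (by simp) h
  | cons ha q ih =>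
    simp only [Walk.bypass]
    split_ifs with hs
    · calc (q.bypass.dropUntil _ hs).length ≤ q.bypass.length :=
            Walk.length_dropUntil_le _ hs
        _ ≤ q.length := Walk.length_bypass_le q
        _ < (Walk.cons ha q).length := by rw [Walk.length_cons]; omega
    · rw [Walk.length_cons, Walk.length_cons]
      have hq : ¬ q.IsPath := by
        intro hq
        rw [Walk.cons_isPath_iff] at h
        push_neg at h
        exact hs (by rw [bypass_eq_of_isPath q hq]; exact h hq)
      exact Nat.add_lt_add_right (ih hq) 1

end Aux

section Aux2
variable {V : Type} [Fintype V] [DecidableEq V]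

lemma Setting.d_eq (S : Setting V) (u v : V) : S.d u v = wlen S.w (S.sp u v) := rfl

lemma Setting.d_self (S : Setting V) (u : V) : S.d u u = 0 := by
  rw [Setting.d_eq, Walk.isPath_iff_eq_nil.1 (S.sp_isPath u u)]
  simp [wlen]

lemma Setting.d_le_wlen (S : Setting V) {u v : V} (q : S.G.Walk u v) :
    S.d u v ≤ wlen S.w q := S.sp_shortest u v q

lemma Setting.eq_sp_of_wlen_le (S : Setting V) {u v : V} (q : S.G.Walk u v)
    (h : wlen S.w q ≤ S.d u v) : q = S.sp u v := by
  have hpath : q.IsPath := by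
    by_contra hnp
    have hlt := bypass_length_lt q hnp
    obtain ⟨l, hperm, hsl⟩ :=
      (Walk.bypass_isPath q).isTrail.edges_nodup.subperm (Walk.edges_bypass_subset q)
    have hw : ∀ e ∈ q.edges, 1 ≤ S.w e := fun e he =>
      S.one_le_w e (Walk.edges_subset_edgeSet q he)
    have h1 := sum_le_of_sublist S.w hsl hw
    have h2 : (l.map S.w).sum = wlen S.w q.bypass := (hperm.map S.w).sum_eq
    have h3 : l.length = q.bypass.length := by
      rw [hperm.length_eq, Walk.length_edges]
    have h4 : (q.bypass.length : ℝ) + 1 ≤ q.length := by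
      exact_mod_cast Nat.succ_le_of_lt hlt
    have h5 := S.sp_shortest u v q.bypass
    have h6 : (q.edges.map S.w).sum = wlen S.w q := rfl
    rw [h2, h3, h6, Walk.length_edges] at h1
    rw [Setting.d_eq] at h
    linarith
  exact S.sp_unique u v q hpath
    (le_antisymm (h.trans (le_of_eq rfl)) (S.sp_shortest u v q))

lemma exists_first (S : Setting V) (C : Set V) : ∀ {x y : V} (q : S.G.Walk x y), y ∈ C →
    ∃ c, c ∈ C ∧ ∃ (seg : S.G.Walk x c) (rest : S.G.Walk c y),
      q = seg.append rest ∧ ∀ c' ∈ C, c' ∈ seg.support → c' = c := by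
  intro x y q
  induction q with
  | nil => exact fun hy => ⟨_, hy, Walk.nil, Walk.nil, rfl, by simp⟩
  | @cons a b y' ha q ih =>
    intro hy
    classical
    by_cases haC : a ∈ C
    · refine ⟨a, haC, Walk.nil, Walk.cons ha q, rfl, ?_⟩
      intro c' _ hc'
      simpa using hc'
    · obtain ⟨c, hc, seg, rest, heq, hseg⟩ := ih hy
      refine ⟨c, hc, Walk.cons ha seg, rest, by rw [Walk.cons_append, ← heq], ?_⟩
      intro c' hc'C hc'
      rw [Walk.support_cons, List.mem_cons] at hc'
      rcases hc' with h | h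
      · exact absurd (h ▸ hc'C) haC
      · exact hseg c' hc'C h

end Aux2

section Aux3
variable {V : Type} [Fintype V] [DecidableEq V]

lemma concat_walk (S : Setting V) : ∀ (n : ℕ) (f : Fin (n + 1) → V),
    ∃ W : S.G.Walk (f 0) (f (Fin.last n)),
      wlen S.w W = ∑ j : Fin n, S.d (f j.castSucc) (f j.succ) ∧
      ∀ j, f j ∈ W.support := by
  intro n
  induction n with
  | zero =>
    intro f
    have h : Fin.last 0 = 0 := Fin.fin_one_eq_zero _
    refine ⟨(Walk.nil : S.G.Walk (f 0) (f 0)).copy rfl (congrArg f h.symm), ?_, ?_⟩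
    · simp
    · intro j
      have : j = 0 := Fin.fin_one_eq_zero _
      simp [this, Walk.support_copy]
  | succ n ihn =>
    intro f
    obtain ⟨W', hW', hsupp'⟩ := ihn (fun i => f i.succ)
    have h1 : f (Fin.succ 0) = f 1 := by rw [Fin.succ_zero_eq_one]
    have h2 : f (Fin.last n).succ = f (Fin.last (n + 1)) := by rw [Fin.succ_last]
    refine ⟨(S.sp (f 0) (f 1)).append (W'.copy h1 h2), ?_, ?_⟩
    · rw [wlen_append, wlen_copy, hW', Fin.sum_univ_succ]
      have e1 : wlen S.w (S.sp (f 0) (f 1)) =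
          S.d (f (0 : Fin (n + 1)).castSucc) (f (0 : Fin (n + 1)).succ) := by
        rw [Fin.castSucc_zero, Fin.succ_zero_eq_one]; rfl
      rw [e1]
      simp only [Fin.succ_castSucc]
    · intro j
      rw [Walk.mem_support_append_iff]
      refine Fin.cases ?_ ?_ j
      · exact Or.inl (Walk.start_mem_support _)
      · intro i
        right
        rw [Walk.support_copy]
        exact hsupp' i

lemma triv_chain (S : Setting V) (C : Set V) (r : ℝ) (u : V) :
    ∃ (n : ℕ) (f : Fin (n + 1) → V), f 0 = u ∧ f (Fin.last n) = u ∧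
      (∀ j : Fin n, S.shortcutAdj C r (f j.castSucc) (f j.succ)) ∧
      ∑ j : Fin n, S.d (f j.castSucc) (f j.succ) = S.d u u :=
  ⟨0, fun _ => u, rfl, rfl, fun j => j.elim0, by simp [Setting.d_self]⟩

end Aux3

section Aux4
variable {V : Type} [Fintype V] [DecidableEq V]

lemma d_le_r_of_split (S : Setting V) (C : Set V) (r : ℝ) (v1 v2 : V)
    (hconsec : ∀ a b : V, a ∈ C → b ∈ C →
      a ∈ (S.sp v1 v2).support → b ∈ (S.sp v1 v2).support →
      (S.sp v1 v2).support.idxOf a < (S.sp v1 v2).support.idxOf b →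
      (∀ c ∈ C, c ∈ (S.sp v1 v2).support →
        ¬((S.sp v1 v2).support.idxOf a < (S.sp v1 v2).support.idxOf c ∧
          (S.sp v1 v2).support.idxOf c < (S.sp v1 v2).support.idxOf b)) →
      S.d a b ≤ r)
    {a b : V} (ha : a ∈ C) (hb : b ∈ C) (hab : a ≠ b)
    (q1 : S.G.Walk v1 a) (q2 : S.G.Walk a b) (q3 : S.G.Walk b v2)
    (hsplit : S.sp v1 v2 = (q1.append q2).append q3)
    (hint : ∀ c ∈ C, c ∈ q2.support → c = a ∨ c = b) :
    S.d a b ≤ r := by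
  have snodup : (S.sp v1 v2).support.Nodup := (S.sp_isPath v1 v2).support_nodup
  set s := (S.sp v1 v2).support with hsdef
  set l1' : List V := q1.reverse.support.tail.reverse with hl1'
  set l2 : List V := q2.support.tail with hl2
  set l3 : List V := q3.support.tail with hl3
  have hq1 : q1.support = l1' ++ [a] := by
    have h := SimpleGraph.Walk.support_eq_cons q1.reverse
    have h2 : q1.support = q1.reverse.support.reverse := by
      rw [Walk.support_reverse, List.reverse_reverse]
    rw [h2, h, List.reverse_cons, hl1']
  have hs : s = l1' ++ (a :: (l2 ++ l3)) := by
    rw [hsdef, hsplit, Walk.support_append, Walk.support_append, hq1]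
    simp [List.append_assoc]
    rw [Walk.support_eq_cons q2]
    rfl
  have snd : (l1' ++ (a :: (l2 ++ l3))).Nodup := hs ▸ snodup
  obtain ⟨h1nd, h2nd, hdisj⟩ := List.nodup_append.1 snd
  have hnal1' : a ∉ l1' := fun h => hdisj a h a List.mem_cons_self rfl
  have hb2 : b ∈ l2 := by
    have hbend : b ∈ q2.support := Walk.end_mem_support q2
    rw [Walk.support_eq_cons q2, List.mem_cons] at hbend
    rcases hbend with h | h
    · exact absurd h.symm hab
    · exact h
  have hnbl1' : b ∉ l1' := fun h =>
    hdisj b h b (List.mem_cons_of_mem _ (List.mem_append_left _ hb2)) rfl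
  have idxa : s.idxOf a = l1'.length := by
    rw [hs, List.idxOf_append_of_notMem hnal1', List.idxOf_cons_self]
    exact Nat.add_zero _
  have idxb : s.idxOf b = l1'.length + (l2.idxOf b + 1) := by
    rw [hs, List.idxOf_append_of_notMem hnbl1',
      List.idxOf_cons_ne _ hab, List.idxOf_append_of_mem hb2]
  have hidxblt : l2.idxOf b < l2.length := List.idxOf_lt_length_iff.2 hb2
  have amem : a ∈ s := by
    rw [hs]; exact List.mem_append_right _ (List.mem_cons_self)
  have bmem : b ∈ s := by
    rw [hs]
    exact List.mem_append_right _
      (List.mem_cons_of_mem _ (List.mem_append_left _ hb2))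
  refine hconsec a b ha hb amem bmem ?_ ?_
  · rw [idxa, idxb]; omega
  · intro c hcC hcmem ⟨hlt1, hlt2⟩
    rw [idxa] at hlt1
    rw [idxb] at hlt2
    have hilt : s.idxOf c < s.length := List.idxOf_lt_length_iff.2 hcmem
    have hcs : s[s.idxOf c] = c := List.getElem_idxOf hilt
    have hslen : s.length = l1'.length + (l2.length + l3.length + 1) := by
      rw [hs]; simp only [List.length_append, List.length_cons]; try omega
    -- compute s[idxOf c]
    obtain ⟨m, hm⟩ : ∃ m, s.idxOf c = l1'.length + (m + 1) := by
      refine ⟨s.idxOf c - l1'.length - 1, ?_⟩; omega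
    have hmlt : m < l2.length := by omega
    have h0 : (l1' ++ a :: (l2 ++ l3))[s.idxOf c]? = some c := by
      rw [← hs, List.getElem?_eq_getElem hilt, hcs]
    rw [List.getElem?_append_right (by omega : l1'.length ≤ s.idxOf c)] at h0
    have hsub : s.idxOf c - l1'.length = m + 1 := by omega
    rw [hsub, List.getElem?_cons_succ, List.getElem?_append, if_pos hmlt,
      List.getElem?_eq_getElem hmlt] at h0
    have hcl2 : c ∈ l2 := (Option.some.inj h0) ▸ List.getElem_mem hmlt
    have hcsup : c ∈ q2.support := by
      rw [Walk.support_eq_cons q2]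
      exact List.mem_cons_of_mem _ hcl2
    rcases hint c hcC hcsup with h | h
    · subst h; omega
    · subst h; omega

end Aux4

section Aux5
variable {V : Type} [Fintype V] [DecidableEq V]

lemma main_chain (S : Setting V) (C : Set V) (r : ℝ) (v1 v2 : V) (hv2 : v2 ∈ C)
    (H2 : ∀ (a b : V), a ∈ C → b ∈ C → a ≠ b →
      ∀ (q1 : S.G.Walk v1 a) (q2 : S.G.Walk a b) (q3 : S.G.Walk b v2),
        S.sp v1 v2 = (q1.append q2).append q3 →
        (∀ c ∈ C, c ∈ q2.support → c = a ∨ c = b) → S.d a b ≤ r) :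
    ∀ (N : ℕ) (u : V) (q : S.G.Walk u v2), q.length ≤ N → u ∈ C → q = S.sp u v2 →
      (∃ q1 : S.G.Walk v1 u, S.sp v1 v2 = q1.append q) →
      ∃ (n : ℕ) (f : Fin (n + 1) → V), f 0 = u ∧ f (Fin.last n) = v2 ∧
        (∀ j : Fin n, S.shortcutAdj C r (f j.castSucc) (f j.succ)) ∧
        ∑ j : Fin n, S.d (f j.castSucc) (f j.succ) = S.d u v2 := by
  intro N
  induction N with
  | zero =>
    intro u q hlen hu hq _
    have h : u = v2 := Walk.eq_of_length_eq_zero (Nat.le_zero.1 hlen)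
    subst h
    exact triv_chain S C r _
  | succ N ih =>
    intro u q hlen hu hqsp hpre
    by_cases hu2 : u = v2
    · subst hu2
      exact triv_chain S C r _
    · cases q with
      | nil => exact absurd rfl hu2
      | cons ha q' =>
        obtain ⟨c, hcC, seg', rest, heq', hseg'⟩ := exists_first S C q' hv2
        have heq : Walk.cons ha q' = (Walk.cons ha seg').append rest := by
          rw [Walk.cons_append, ← heq']
        set seg : S.G.Walk u c := Walk.cons ha seg' with hsegdef
        have hpath : (Walk.cons ha q').IsPath := by rw [hqsp]; exact S.sp_isPath u v2
        rw [Walk.cons_isPath_iff] at hpath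
        have hcq' : c ∈ q'.support := by
          rw [heq', Walk.mem_support_append_iff]
          exact Or.inl (Walk.end_mem_support seg')
        have hcne : c ≠ u := fun h => hpath.2 (h ▸ hcq')
        have hq_wlen : wlen S.w (Walk.cons ha q') = S.d u v2 := by rw [hqsp]; rfl
        have hsplit_wlen : wlen S.w seg + wlen S.w rest = S.d u v2 := by
          rw [← wlen_append, ← heq, hq_wlen]
        have hseg_le : wlen S.w seg ≤ S.d u c := by
          have h1 := S.d_le_wlen ((S.sp u c).append rest)
          rw [wlen_append] at h1
          have h2 : wlen S.w (S.sp u c) = S.d u c := rfl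
          linarith
        have hseg_sp : seg = S.sp u c := S.eq_sp_of_wlen_le seg hseg_le
        have hrest_le : wlen S.w rest ≤ S.d c v2 := by
          have h1 := S.d_le_wlen (seg.append (S.sp c v2))
          rw [wlen_append] at h1
          have h2 : wlen S.w (S.sp c v2) = S.d c v2 := rfl
          linarith
        have hrest_sp : rest = S.sp c v2 := S.eq_sp_of_wlen_le rest hrest_le
        have hsum2 : S.d u c + S.d c v2 = S.d u v2 := by
          have e1 : wlen S.w seg = S.d u c := by rw [hseg_sp]; rfl
          have e2 : wlen S.w rest = S.d c v2 := by rw [hrest_sp]; rfl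
          rw [← e1, ← e2]; exact hsplit_wlen
        obtain ⟨q1, hq1⟩ := hpre
        have hsplit0 : S.sp v1 v2 = (q1.append seg).append rest := by
          rw [hq1, heq, Walk.append_assoc]
        have hsegC : ∀ c' ∈ C, c' ∈ seg.support → c' = u ∨ c' = c := by
          intro c' hc'C hc'
          rw [hsegdef, Walk.support_cons, List.mem_cons] at hc'
          rcases hc' with h | h
          · exact Or.inl h
          · exact Or.inr (hseg' c' hc'C h)
        have hducr : S.d u c ≤ r :=
          H2 u c hu hcC (Ne.symm hcne) q1 seg rest hsplit0 hsegC
        have hadj : S.shortcutAdj C r u c :=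
          ⟨Ne.symm hcne, hu, hcC, hducr,
            fun c' h1 h2 => hsegC c' h1 (hseg_sp ▸ h2)⟩
        have hrest_len : rest.length ≤ N := by
          have h1 : (Walk.cons ha q').length = q'.length + 1 := Walk.length_cons _ _
          have h2 : q'.length = seg'.length + rest.length := by
            rw [heq', Walk.length_append]
          omega
        obtain ⟨n', f', h0', hlast', hadj', hsum'⟩ :=
          ih c rest hrest_len hcC hrest_sp
            ⟨q1.append seg, by rw [hsplit0]⟩
        refine ⟨n' + 1, Fin.cons u f', Fin.cons_zero _ _, ?_, ?_, ?_⟩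
        · rw [← Fin.succ_last, Fin.cons_succ]; exact hlast'
        · intro j
          refine Fin.cases ?_ ?_ j
          · simp only [Fin.castSucc_zero, Fin.cons_zero, Fin.succ_zero_eq_one]
            have e2 : (Fin.cons u f' : Fin (n' + 2) → V) 1 = c := by
              rw [← Fin.succ_zero_eq_one, Fin.cons_succ]; exact h0'
            rw [e2]; exact hadj
          · intro i
            rw [← Fin.succ_castSucc, Fin.cons_succ, Fin.cons_succ]
            exact hadj' i
        · rw [Fin.sum_univ_succ]
          simp only [Fin.castSucc_zero, Fin.cons_zero, Fin.cons_succ, ← Fin.succ_castSucc]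
          rw [h0', hsum', hsum2]

end Aux5

/-- If consecutive vertices of `C` along `p(v1,v2)` are at
distance at most `r`, then the shortcut graph `G(C,r)` preserves the distance
between `v1` and `v2`, and every vertex on a shortest `v1`–`v2` walk in
`G(C,r)` lies on `p(v1,v2)`. -/
theorem stmt17 {V : Type} [Fintype V] [DecidableEq V] (S : Setting V)
    (C : Set V) (r : ℝ) (hr : 0 < r) (v1 v2 : V) (hv1 : v1 ∈ C) (hv2 : v2 ∈ C)
    (hconsec : ∀ a b : V, a ∈ C → b ∈ C →
      a ∈ (S.sp v1 v2).support → b ∈ (S.sp v1 v2).support →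
      (S.sp v1 v2).support.idxOf a < (S.sp v1 v2).support.idxOf b →
      (∀ c ∈ C, c ∈ (S.sp v1 v2).support →
        ¬((S.sp v1 v2).support.idxOf a < (S.sp v1 v2).support.idxOf c ∧
          (S.sp v1 v2).support.idxOf c < (S.sp v1 v2).support.idxOf b)) →
      S.d a b ≤ r) :
    (∃ (n : ℕ) (f : Fin (n + 1) → V), f 0 = v1 ∧ f (Fin.last n) = v2 ∧
      (∀ j : Fin n, S.shortcutAdj C r (f j.castSucc) (f j.succ)) ∧
      ∑ j : Fin n, S.d (f j.castSucc) (f j.succ) = S.d v1 v2) ∧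
    (∀ (n : ℕ) (f : Fin (n + 1) → V), f 0 = v1 → f (Fin.last n) = v2 →
      (∀ j : Fin n, S.shortcutAdj C r (f j.castSucc) (f j.succ)) →
      S.d v1 v2 ≤ ∑ j : Fin n, S.d (f j.castSucc) (f j.succ)) ∧
    (∀ (n : ℕ) (f : Fin (n + 1) → V), f 0 = v1 → f (Fin.last n) = v2 →
      (∀ j : Fin n, S.shortcutAdj C r (f j.castSucc) (f j.succ)) →
      (∑ j : Fin n, S.d (f j.castSucc) (f j.succ)) = S.d v1 v2 →
      ∀ j : Fin (n + 1), f j ∈ (S.sp v1 v2).support) := by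
  classical
  refine ⟨?_, ?_, ?_⟩
  · have H2 : ∀ (a b : V), a ∈ C → b ∈ C → a ≠ b →
        ∀ (q1 : S.G.Walk v1 a) (q2 : S.G.Walk a b) (q3 : S.G.Walk b v2),
          S.sp v1 v2 = (q1.append q2).append q3 →
          (∀ c ∈ C, c ∈ q2.support → c = a ∨ c = b) → S.d a b ≤ r :=
      fun a b ha hb hab q1 q2 q3 hsplit hint =>
        d_le_r_of_split S C r v1 v2 hconsec ha hb hab q1 q2 q3 hsplit hint
    obtain ⟨n, f, h0, hlast, hadj, hsum⟩ :=
      main_chain S C r v1 v2 hv2 H2 (S.sp v1 v2).length v1 (S.sp v1 v2) le_rfl hv1 rfl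
        ⟨Walk.nil, (Walk.nil_append _).symm⟩
    exact ⟨n, f, h0, hlast, hadj, hsum⟩
  · intro n f h0 hlast hadj
    subst h0; subst hlast
    obtain ⟨W, hW, -⟩ := concat_walk S n f
    rw [← hW]
    exact S.sp_shortest _ _ W
  · intro n f h0 hlast hadj hsum j
    subst h0; subst hlast
    obtain ⟨W, hW, hsupp⟩ := concat_walk S n f
    have hWsp : W = S.sp (f 0) (f (Fin.last n)) :=
      S.eq_sp_of_wlen_le W (by rw [hW, hsum])
    rw [← hWsp]
    exact hsupp j
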